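/- (Center amplitudes and peak-to-background bound for the fundamental rogue wave.) Let ρ₁, ρ₂, k₁, k₂, γ be real constants, p₀ = p₀ᵣ + i·p₀ᵢ ∈ ℂ with p₀ᵣ > 0, and let A, B, L be the fundamental rogue wave given by ℓ₁ = x + 2p₀ᵢt, ℓ₂ = −2p₀ᵣt, ζ₀ = 1/(4p₀ᵣ²), â_j = p₀ᵣ/(p₀ᵣ² + (p₀ᵢ − k_j)²), b̂_j = (k_j − p₀ᵢ)/(p₀ᵣ² + (p₀ᵢ − k_j)²), ρ̂_j = ρ_j·e^{i(k_j x + (γ + k_j²)t)} for j=1,2, A = ρ̂₁·[1 − (2i(â₁ℓ₂ − b̂₁ℓ₁) + (â₁² + b̂₁²))/(ℓ₁² + ℓ₂² + ζ₀)], B = ρ̂₂·[1 − (2i(â₂ℓ₂ − b̂₂ℓ₁) + (â₂² + b̂₂²))/(ℓ₁² + ℓ₂² + ζ₀)], L = γ + 4(ℓ₁² − ℓ₂² − ζ₀)/(ℓ₁² + ℓ₂² + ζ₀)². Then at the origin (x,t) = (0,0): |A(0,0)| = |ρ₁|·|1 − 4p₀ᵣ²/(p₀ᵣ² + (p₀ᵢ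 − k₁)²)|, |B(0,0)| = |ρ₂|·|1 − 4p₀ᵣ²/(p₀ᵣ² + (p₀ᵢ − k₂)²)|, L(0,0) = γ − 16p₀ᵣ²; moreover the peak-to-background ratios satisfy |A(0,0)| ≤ 3|ρ₁| and |B(0,0)| ≤ 3|ρ₂|. -/

import Mathlib

open Complex

noncomputable section

/-- `ℓ₁ = x + 2 p₀ᵢ t`. -/
def ell1 (p₀ : ℂ) (x t : ℝ) : ℝ := x + 2 * p₀.im * t

/-- `ℓ₂ = −2 p₀ᵣ t`. -/
def ell2 (p₀ : ℂ) (t : ℝ) : ℝ := -2 * p₀.re * t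

/-- `ζ₀ = 1/(4 p₀ᵣ²)`. -/
def zeta0 (p₀ : ℂ) : ℝ := 1 / (4 * p₀.re ^ 2)

/-- `â_j = p₀ᵣ/(p₀ᵣ² + (p₀ᵢ − k_j)²)`. -/
def ahat (p₀ : ℂ) (kj : ℝ) : ℝ := p₀.re / (p₀.re ^ 2 + (p₀.im - kj) ^ 2)

/-- `b̂_j = (k_j − p₀ᵢ)/(p₀ᵣ² + (p₀ᵢ − k_j)²)`. -/
def bhat (p₀ : ℂ) (kj : ℝ) : ℝ := (kj - p₀.im) / (p₀.re ^ 2 + (p₀.im - kj) ^ 2)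

/-- `ρ̂_j(x,t) = ρ_j e^{i(k_j x + (γ + k_j²)t)}`. -/
def rhohat (ρj kj γ : ℝ) (x t : ℝ) : ℂ :=
  (ρj : ℂ) * Complex.exp (Complex.I * ((kj * x + (γ + kj ^ 2) * t : ℝ) : ℂ))

/-- A fundamental rogue-wave short-wave component. -/
def fundSW (ρj kj γ : ℝ) (p₀ : ℂ) (x t : ℝ) : ℂ :=
  rhohat ρj kj γ x t *
    (1 - (2 * Complex.I * ((ahat p₀ kj * ell2 p₀ t - bhat p₀ kj * ell1 p₀ x t : ℝ) : ℂ)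
            + ((ahat p₀ kj ^ 2 + bhat p₀ kj ^ 2 : ℝ) : ℂ))
        / ((ell1 p₀ x t ^ 2 + ell2 p₀ t ^ 2 + zeta0 p₀ : ℝ) : ℂ))

/-- The fundamental rogue-wave long-wave component. -/
def fundL (γ : ℝ) (p₀ : ℂ) (x t : ℝ) : ℝ :=
  γ + 4 * (ell1 p₀ x t ^ 2 - ell2 p₀ t ^ 2 - zeta0 p₀)
      / (ell1 p₀ x t ^ 2 + ell2 p₀ t ^ 2 + zeta0 p₀) ^ 2

/-- `Q(p) = δ₁ρ₁²/(p − ik₁) + δ₂ρ₂²/(p − ik₂) + ip²`. -/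
def QQ (δ₁ δ₂ ρ₁ ρ₂ k₁ k₂ : ℝ) (p : ℂ) : ℂ :=
  ((δ₁ * ρ₁ ^ 2 : ℝ) : ℂ) / (p - Complex.I * k₁)
    + ((δ₂ * ρ₂ ^ 2 : ℝ) : ℂ) / (p - Complex.I * k₂) + Complex.I * p ^ 2

/-! At the origin `ℓ₁ = ℓ₂ = 0` and `ρ̂ = ρ`, so the short-wave amplitude is the real number
`ρ (1 - (â² + b̂²)/ζ₀)`, and `â² + b̂² = 1/(p₀ᵣ² + (p₀ᵢ - k)²)` turns the correction into
`4p₀ᵣ²/(p₀ᵣ² + (p₀ᵢ - k)²) ∈ [0, 4]`, whence the factor `3`. -/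

theorem abs_one_sub_four_mul_sq_div_le_three (a b : ℝ) :
    |1 - 4 * a ^ 2 / (a ^ 2 + b ^ 2)| ≤ 3 := by
  have h₀ : 0 ≤ a ^ 2 / (a ^ 2 + b ^ 2) := by positivity
  have h₁ : a ^ 2 / (a ^ 2 + b ^ 2) ≤ 1 :=
    div_le_one_of_le₀ (le_add_of_nonneg_right (sq_nonneg b)) (by positivity)
  rw [abs_le, mul_div_assoc]
  constructor <;> linarith

theorem ahat_sq_add_bhat_sq (p₀ : ℂ) (k : ℝ) :
    ahat p₀ k ^ 2 + bhat p₀ k ^ 2 = (p₀.re ^ 2 + (p₀.im - k) ^ 2)⁻¹ := by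
  rw [ahat, bhat, div_pow, div_pow, ← add_div, ← neg_sub p₀.im, neg_sq, sq (_ + _),
    div_self_mul_self']

theorem fundSW_origin (ρ k γ : ℝ) (p₀ : ℂ) :
    fundSW ρ k γ p₀ 0 0
      = ((ρ * (1 - 4 * p₀.re ^ 2 / (p₀.re ^ 2 + (p₀.im - k) ^ 2)) : ℝ) : ℂ) := by
  have h : fundSW ρ k γ p₀ 0 0
      = ((ρ * (1 - (ahat p₀ k ^ 2 + bhat p₀ k ^ 2) / zeta0 p₀) : ℝ) : ℂ) := by
    simp [fundSW, rhohat, ell1, ell2]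
  rw [h, ahat_sq_add_bhat_sq, zeta0, one_div, inv_div_inv]

theorem norm_fundSW_origin (ρ k γ : ℝ) (p₀ : ℂ) :
    ‖fundSW ρ k γ p₀ 0 0‖ = |ρ| * |1 - 4 * p₀.re ^ 2 / (p₀.re ^ 2 + (p₀.im - k) ^ 2)| := by
  rw [fundSW_origin, Complex.norm_real, Real.norm_eq_abs, abs_mul]

theorem norm_fundSW_origin_le (ρ k γ : ℝ) (p₀ : ℂ) :
    ‖fundSW ρ k γ p₀ 0 0‖ ≤ 3 * |ρ| := by
  rw [norm_fundSW_origin, mul_comm]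
  exact mul_le_mul_of_nonneg_right (abs_one_sub_four_mul_sq_div_le_three _ _) (abs_nonneg ρ)

theorem fundL_origin (γ : ℝ) (p₀ : ℂ) : fundL γ p₀ 0 0 = γ - 16 * p₀.re ^ 2 := by
  have h : fundL γ p₀ 0 0 = γ - 4 * (zeta0 p₀ / (zeta0 p₀ * zeta0 p₀)) := by
    simp only [fundL, ell1, ell2, mul_zero, add_zero]
    ring
  rw [h, div_self_mul_self', zeta0, one_div, inv_inv]
  ring

theorem stmt_10_general (ρ₁ ρ₂ k₁ k₂ γ : ℝ) (p₀ : ℂ) :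
    ‖fundSW ρ₁ k₁ γ p₀ 0 0‖
      = |ρ₁| * |1 - 4 * p₀.re ^ 2 / (p₀.re ^ 2 + (p₀.im - k₁) ^ 2)| ∧
    ‖fundSW ρ₂ k₂ γ p₀ 0 0‖
      = |ρ₂| * |1 - 4 * p₀.re ^ 2 / (p₀.re ^ 2 + (p₀.im - k₂) ^ 2)| ∧
    fundL γ p₀ 0 0 = γ - 16 * p₀.re ^ 2 ∧
    ‖fundSW ρ₁ k₁ γ p₀ 0 0‖ ≤ 3 * |ρ₁| ∧
    ‖fundSW ρ₂ k₂ γ p₀ 0 0‖ ≤ 3 * |ρ₂| :=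
  ⟨norm_fundSW_origin _ _ _ _, norm_fundSW_origin _ _ _ _, fundL_origin _ _,
    norm_fundSW_origin_le _ _ _ _, norm_fundSW_origin_le _ _ _ _⟩

theorem stmt_10 (ρ₁ ρ₂ k₁ k₂ γ : ℝ) (p₀ : ℂ) (hre : 0 < p₀.re) :
    ‖fundSW ρ₁ k₁ γ p₀ 0 0‖
      = |ρ₁| * |1 - 4 * p₀.re ^ 2 / (p₀.re ^ 2 + (p₀.im - k₁) ^ 2)| ∧
    ‖fundSW ρ₂ k₂ γ p₀ 0 0‖
      = |ρ₂| * |1 - 4 * p₀.re ^ 2 / (p₀.re ^ 2 + (p₀.im - k₂) ^ 2)| ∧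
    fundL γ p₀ 0 0 = γ - 16 * p₀.re ^ 2 ∧
    ‖fundSW ρ₁ k₁ γ p₀ 0 0‖ ≤ 3 * |ρ₁| ∧
    ‖fundSW ρ₂ k₂ γ p₀ 0 0‖ ≤ 3 * |ρ₂| :=
  stmt_10_general ρ₁ ρ₂ k₁ k₂ γ p₀
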